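/- arXiv:2209.08551 — 2 statements merged into one kernel-verified Lean document; each statement's English description precedes it below -/
import Mathlib

section
/- Let {f_k} be a (Θ,Θ*)-frame for a Hilbert space H with bounds γ, δ, and let Ξ ∈ B(H) satisfy: (i) Ξ is hyponormal on the range of Θ, i.e., ‖Ξ* g‖ ≤ ‖Ξ g‖ for all g ∈ Ran(Θ); (ii) Θ Ξ* = Ξ* Θ. Then {Ξ f_k} is a (ΞΘ, (ΞΘ)*)-frame for H with the same bounds: γ‖(ΞΘ)*f‖² ≤ Σ_k |⟨Ξf_k, f⟩|² ≤ δ‖ΞΘ f‖² for all f ∈ H. -/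
/-! The frame inequalities for `{Ξ f_k}` at `g` are the frame inequalities for `{f_k}` at `Ξ* g`,
since `⟨Ξ f_k, g⟩ = ⟨f_k, Ξ* g⟩`. The lower bound is then immediate from `(ΞΘ)* = Θ* Ξ*`; for the
upper bound, commutation gives `Θ Ξ* g = Ξ* Θ g`, and hyponormality on `Ran Θ` bounds its norm
by `‖Ξ Θ g‖`. -/

open ContinuousLinearMap

section

variable {𝕜 E F I : Type*} [RCLike 𝕜]
  [NormedAddCommGroup E] [InnerProductSpace 𝕜 E] [CompleteSpace E]
  [NormedAddCommGroup F] [InnerProductSpace 𝕜 F] [CompleteSpace F]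

theorem tsum_norm_inner_map_sq (T : E →L[𝕜] F) (f : I → E) (g : F) :
    ∑' k, ‖(inner 𝕜 (T (f k)) g : 𝕜)‖ ^ 2 = ∑' k, ‖(inner 𝕜 (T.adjoint g) (f k) : 𝕜)‖ ^ 2 :=
  tsum_congr fun k => by rw [← adjoint_inner_right, norm_inner_symm]

theorem norm_map_adjoint_le_of_comm (Θ Ξ : E →L[𝕜] E)
    (hhypo : ∀ g ∈ Set.range Θ, ‖Ξ.adjoint g‖ ≤ ‖Ξ g‖)
    (hcomm : Θ ∘L Ξ.adjoint = Ξ.adjoint ∘L Θ) (g : E) :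
    ‖Θ (Ξ.adjoint g)‖ ≤ ‖(Ξ ∘L Θ) g‖ := by
  have hswap : Θ (Ξ.adjoint g) = Ξ.adjoint (Θ g) := congrArg (fun T : E →L[𝕜] E => T g) hcomm
  rw [hswap]
  exact hhypo _ ⟨g, rfl⟩

end

theorem stmt_4_general {H : Type*} [NormedAddCommGroup H] [InnerProductSpace ℂ H] [CompleteSpace H]
    {I : Type*} (f : I → H) (Θ Ξ : H →L[ℂ] H) (γ δ : ℝ)
    (hδ : 0 < δ)
    (hframe : ∀ g : H, γ * ‖Θ.adjoint g‖ ^ 2 ≤ ∑' k, ‖(inner ℂ g (f k) : ℂ)‖ ^ 2 ∧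
      ∑' k, ‖(inner ℂ g (f k) : ℂ)‖ ^ 2 ≤ δ * ‖Θ g‖ ^ 2)
    (hhypo : ∀ g ∈ Set.range Θ, ‖Ξ.adjoint g‖ ≤ ‖Ξ g‖)
    (hcomm : Θ ∘L Ξ.adjoint = Ξ.adjoint ∘L Θ) :
    ∀ g : H,
      γ * ‖(Ξ ∘L Θ).adjoint g‖ ^ 2 ≤ ∑' k, ‖(inner ℂ (Ξ (f k)) g : ℂ)‖ ^ 2 ∧
      ∑' k, ‖(inner ℂ (Ξ (f k)) g : ℂ)‖ ^ 2 ≤ δ * ‖(Ξ ∘L Θ) g‖ ^ 2 := by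
  intro g
  obtain ⟨hlower, hupper⟩ := hframe (Ξ.adjoint g)
  rw [tsum_norm_inner_map_sq, adjoint_comp]
  refine ⟨hlower, hupper.trans ?_⟩
  gcongr
  exact norm_map_adjoint_le_of_comm Θ Ξ hhypo hcomm g

theorem stmt_4 {H : Type*} [NormedAddCommGroup H] [InnerProductSpace ℂ H] [CompleteSpace H]
    {I : Type*} [Countable I] (f : I → H) (Θ Ξ : H →L[ℂ] H) (γ δ : ℝ)
    (hγ : 0 < γ) (hδ : 0 < δ)
    (hframe : ∀ g : H, γ * ‖Θ.adjoint g‖ ^ 2 ≤ ∑' k, ‖(inner ℂ g (f k) : ℂ)‖ ^ 2 ∧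
      ∑' k, ‖(inner ℂ g (f k) : ℂ)‖ ^ 2 ≤ δ * ‖Θ g‖ ^ 2)
    (hhypo : ∀ g ∈ Set.range Θ, ‖Ξ.adjoint g‖ ≤ ‖Ξ g‖)
    (hcomm : Θ ∘L Ξ.adjoint = Ξ.adjoint ∘L Θ) :
    ∀ g : H,
      γ * ‖(Ξ ∘L Θ).adjoint g‖ ^ 2 ≤ ∑' k, ‖(inner ℂ (Ξ (f k)) g : ℂ)‖ ^ 2 ∧
      ∑' k, ‖(inner ℂ (Ξ (f k)) g : ℂ)‖ ^ 2 ≤ δ * ‖(Ξ ∘L Θ) g‖ ^ 2 :=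
  stmt_4_general f Θ Ξ γ δ hδ hframe hhypo hcomm
end

section
/- Let {f_k}_{k∈I} and {g_k}_{k∈I} be (Θ,Θ*)-frames for a Hilbert space H with bounds γ₁, δ₁ and γ₂, δ₂ respectively. Suppose Θ* is bounded below by m₀ > 0 and √(γ₁/δ₂) > ‖Θ‖/m₀. Then {f_k + g_k}_{k∈I} is a (Θ,Θ*)-frame for H with lower bound (√γ₁ − √δ₂·‖Θ‖/m₀)² and upper bound 2(δ₁ + δ₂). -/
/-
Write `u k = ⟪x, f k⟫` and `v k = ⟪x, g k⟫`. By Minkowski's inequality in `ℓ²`,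
`‖u + v‖₂ ≥ ‖u‖₂ - ‖v‖₂ ≥ (√γ₁ - √δ₂ ‖Θ‖ / m₀) ‖Θ* x‖`, where `‖Θ x‖ ≤ ‖Θ‖ ‖x‖ ≤ ‖Θ‖ ‖Θ* x‖ / m₀`
converts the upper bound `√δ₂ ‖Θ x‖` of `‖v‖₂` into a multiple of `‖Θ* x‖`; the hypothesis on
`√(γ₁ / δ₂)` makes the constant positive, so the inequality may be squared. The upper bound is
`‖a + b‖² ≤ 2 ‖a‖² + 2 ‖b‖²` termwise. Since `∑'` is `0` on non-summable families, the
square-summability of `u` and `v` is needed; it follows from the lower frame bounds, as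
`Θ* x ≠ 0` for `x ≠ 0`.
-/

open ContinuousLinearMap

section SquareSummable

variable {ι E : Type*} [SeminormedAddCommGroup E]

lemma summable_of_pos_le_tsum {f : ι → ℝ} {c : ℝ} (hc : 0 < c) (h : c ≤ ∑' i, f i) :
    Summable f := by
  by_contra hf
  rw [tsum_eq_zero_of_not_summable hf] at h
  linarith

lemma summable_norm_add_sq_and_sqrt_tsum_le {u v : ι → E}
    (hu : Summable fun i => ‖u i‖ ^ 2) (hv : Summable fun i => ‖v i‖ ^ 2) :
    (Summable fun i => ‖u i + v i‖ ^ 2) ∧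
      √(∑' i, ‖u i + v i‖ ^ 2) ≤ √(∑' i, ‖u i‖ ^ 2) + √(∑' i, ‖v i‖ ^ 2) := by
  have hmink := Real.Lp_add_le_tsum_of_nonneg (p := 2) one_le_two (fun i => norm_nonneg (u i))
    (fun i => norm_nonneg (v i)) (by simpa only [Real.rpow_two] using hu) (by simpa only [Real.rpow_two] using hv)
  simp only [Real.rpow_two, ← Real.sqrt_eq_rpow] at hmink
  have hle : ∀ i, ‖u i + v i‖ ^ 2 ≤ (‖u i‖ + ‖v i‖) ^ 2 := fun i =>
    pow_le_pow_left₀ (norm_nonneg _) (norm_add_le _ _) 2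
  have hsum : Summable fun i => ‖u i + v i‖ ^ 2 :=
    hmink.1.of_nonneg_of_le (fun i => sq_nonneg _) hle
  exact ⟨hsum, (Real.sqrt_le_sqrt (hsum.tsum_le_tsum hle hmink.1)).trans hmink.2⟩

lemma sqrt_tsum_norm_sq_sub_le {u v : ι → E}
    (hu : Summable fun i => ‖u i‖ ^ 2) (hv : Summable fun i => ‖v i‖ ^ 2) :
    √(∑' i, ‖u i‖ ^ 2) - √(∑' i, ‖v i‖ ^ 2) ≤ √(∑' i, ‖u i + v i‖ ^ 2) := by
  have hv' : Summable fun i => ‖-v i‖ ^ 2 := by simpa only [norm_neg] using hv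
  have h := (summable_norm_add_sq_and_sqrt_tsum_le
    (summable_norm_add_sq_and_sqrt_tsum_le hu hv).1 hv').2
  simp only [add_neg_cancel_right, norm_neg] at h
  linarith

lemma tsum_norm_add_sq_le {u v : ι → E}
    (hu : Summable fun i => ‖u i‖ ^ 2) (hv : Summable fun i => ‖v i‖ ^ 2) :
    ∑' i, ‖u i + v i‖ ^ 2 ≤ 2 * (∑' i, ‖u i‖ ^ 2 + ∑' i, ‖v i‖ ^ 2) := by
  rw [← hu.tsum_add hv, ← tsum_mul_left]
  refine (summable_norm_add_sq_and_sqrt_tsum_le hu hv).1.tsum_le_tsum (fun i => ?_)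
    ((hu.add hv).mul_left 2)
  calc ‖u i + v i‖ ^ 2 ≤ (‖u i‖ + ‖v i‖) ^ 2 :=
        pow_le_pow_left₀ (norm_nonneg _) (norm_add_le _ _) 2
    _ ≤ 2 * (‖u i‖ ^ 2 + ‖v i‖ ^ 2) := add_sq_le

lemma sub_sq_mul_sq_le_tsum_norm_add_sq {u v : ι → E}
    (hu : Summable fun i => ‖u i‖ ^ 2) (hv : Summable fun i => ‖v i‖ ^ 2)
    {α β t : ℝ} (hβ : 0 ≤ β) (hβα : β ≤ α) (ht : 0 ≤ t)
    (hu_ge : α ^ 2 * t ^ 2 ≤ ∑' i, ‖u i‖ ^ 2) (hv_le : ∑' i, ‖v i‖ ^ 2 ≤ β ^ 2 * t ^ 2) :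
    (α - β) ^ 2 * t ^ 2 ≤ ∑' i, ‖u i + v i‖ ^ 2 := by
  have hαt : α * t ≤ √(∑' i, ‖u i‖ ^ 2) :=
    (Real.le_sqrt (mul_nonneg (hβ.trans hβα) ht) (tsum_nonneg fun _ => sq_nonneg _)).2 (by linarith)
  have hβt : √(∑' i, ‖v i‖ ^ 2) ≤ β * t :=
    Real.sqrt_le_iff.2 ⟨mul_nonneg hβ ht, by linarith⟩
  have hkey : (α - β) * t ≤ √(∑' i, ‖u i + v i‖ ^ 2) := by
    linarith [sqrt_tsum_norm_sq_sub_le hu hv]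
  rw [← mul_pow]
  exact (Real.le_sqrt (mul_nonneg (sub_nonneg.2 hβα) ht)
    (tsum_nonneg fun _ => sq_nonneg _)).1 hkey

end SquareSummable

lemma norm_apply_le_of_mul_norm_le {𝕜 E F : Type*} [NontriviallyNormedField 𝕜]
    [SeminormedAddCommGroup E] [NormedSpace 𝕜 E] [SeminormedAddCommGroup F] [NormedSpace 𝕜 F]
    (T : E →L[𝕜] F) {x : E} {m r : ℝ} (hm : 0 < m) (hx : m * ‖x‖ ≤ r) :
    ‖T x‖ ≤ ‖T‖ / m * r := by
  calc ‖T x‖ ≤ ‖T‖ * ‖x‖ := T.le_opNorm x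
    _ ≤ ‖T‖ * (r / m) := by gcongr; rwa [le_div_iff₀' hm]
    _ = ‖T‖ / m * r := by ring

lemma mul_div_le_sqrt_of_div_lt_sqrt_div {a m γ δ : ℝ} (hδ : 0 < δ)
    (h : a / m < √(γ / δ)) : √δ * a / m ≤ √γ := by
  have hsδ : 0 < √δ := Real.sqrt_pos.2 hδ
  rw [Real.sqrt_div' γ hδ.le, lt_div_iff₀ hsδ] at h
  rw [mul_div_assoc, mul_comm]
  exact h.le

theorem stmt_7_general {H : Type*} [NormedAddCommGroup H] [InnerProductSpace ℂ H] [CompleteSpace H]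
    {I : Type*} (f g : I → H) (Θ : H →L[ℂ] H) (γ₁ δ₁ γ₂ δ₂ m₀ : ℝ)
    (hγ₁ : 0 < γ₁) (hγ₂ : 0 < γ₂) (hδ₂ : 0 < δ₂) (hm₀ : 0 < m₀)
    (hframef : ∀ x : H, γ₁ * ‖Θ.adjoint x‖ ^ 2 ≤ ∑' k, ‖(inner ℂ x (f k) : ℂ)‖ ^ 2 ∧
      ∑' k, ‖(inner ℂ x (f k) : ℂ)‖ ^ 2 ≤ δ₁ * ‖Θ x‖ ^ 2)
    (hframeg : ∀ x : H, γ₂ * ‖Θ.adjoint x‖ ^ 2 ≤ ∑' k, ‖(inner ℂ x (g k) : ℂ)‖ ^ 2 ∧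
      ∑' k, ‖(inner ℂ x (g k) : ℂ)‖ ^ 2 ≤ δ₂ * ‖Θ x‖ ^ 2)
    (hbb : ∀ x : H, m₀ * ‖x‖ ≤ ‖Θ.adjoint x‖)
    (hcond : ‖Θ‖ / m₀ < Real.sqrt (γ₁ / δ₂)) :
    ∀ x : H,
      (Real.sqrt γ₁ - Real.sqrt δ₂ * ‖Θ‖ / m₀) ^ 2 * ‖Θ.adjoint x‖ ^ 2 ≤
        ∑' k, ‖(inner ℂ x (f k + g k) : ℂ)‖ ^ 2 ∧
      ∑' k, ‖(inner ℂ x (f k + g k) : ℂ)‖ ^ 2 ≤ 2 * (δ₁ + δ₂) * ‖Θ x‖ ^ 2 := by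
  intro x
  rcases eq_or_ne x 0 with rfl | hx
  · simp
  have hΘx : 0 < ‖Θ.adjoint x‖ := (mul_pos hm₀ (norm_pos_iff.2 hx)).trans_le (hbb x)
  obtain ⟨hf_ge, hf_le⟩ := hframef x
  obtain ⟨hg_ge, hg_le⟩ := hframeg x
  have hf := summable_of_pos_le_tsum (by positivity) hf_ge
  have hg := summable_of_pos_le_tsum (by positivity) hg_ge
  simp only [inner_add_right]
  refine ⟨sub_sq_mul_sq_le_tsum_norm_add_sq hf hg (by positivity)
    (mul_div_le_sqrt_of_div_lt_sqrt_div hδ₂ hcond) hΘx.le ?_ ?_, ?_⟩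
  · rwa [Real.sq_sqrt hγ₁.le]
  · calc _ ≤ δ₂ * ‖Θ x‖ ^ 2 := hg_le
      _ ≤ δ₂ * (‖Θ‖ / m₀ * ‖Θ.adjoint x‖) ^ 2 := by
          gcongr; exact norm_apply_le_of_mul_norm_le Θ hm₀ (hbb x)
      _ = (√δ₂ * ‖Θ‖ / m₀) ^ 2 * ‖Θ.adjoint x‖ ^ 2 := by
          rw [mul_div_assoc, mul_pow, mul_pow, Real.sq_sqrt hδ₂.le]; ring
  · calc _ ≤ 2 * (∑' k, ‖(inner ℂ x (f k) : ℂ)‖ ^ 2 + ∑' k, ‖(inner ℂ x (g k) : ℂ)‖ ^ 2) :=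
          tsum_norm_add_sq_le hf hg
      _ ≤ 2 * (δ₁ + δ₂) * ‖Θ x‖ ^ 2 := by linarith

theorem stmt_7 {H : Type*} [NormedAddCommGroup H] [InnerProductSpace ℂ H] [CompleteSpace H]
    {I : Type*} [Countable I] (f g : I → H) (Θ : H →L[ℂ] H) (γ₁ δ₁ γ₂ δ₂ m₀ : ℝ)
    (hγ₁ : 0 < γ₁) (hδ₁ : 0 < δ₁) (hγ₂ : 0 < γ₂) (hδ₂ : 0 < δ₂) (hm₀ : 0 < m₀)
    (hframef : ∀ x : H, γ₁ * ‖Θ.adjoint x‖ ^ 2 ≤ ∑' k, ‖(inner ℂ x (f k) : ℂ)‖ ^ 2 ∧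
      ∑' k, ‖(inner ℂ x (f k) : ℂ)‖ ^ 2 ≤ δ₁ * ‖Θ x‖ ^ 2)
    (hframeg : ∀ x : H, γ₂ * ‖Θ.adjoint x‖ ^ 2 ≤ ∑' k, ‖(inner ℂ x (g k) : ℂ)‖ ^ 2 ∧
      ∑' k, ‖(inner ℂ x (g k) : ℂ)‖ ^ 2 ≤ δ₂ * ‖Θ x‖ ^ 2)
    (hbb : ∀ x : H, m₀ * ‖x‖ ≤ ‖Θ.adjoint x‖)
    (hcond : ‖Θ‖ / m₀ < Real.sqrt (γ₁ / δ₂)) :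
    ∀ x : H,
      (Real.sqrt γ₁ - Real.sqrt δ₂ * ‖Θ‖ / m₀) ^ 2 * ‖Θ.adjoint x‖ ^ 2 ≤
        ∑' k, ‖(inner ℂ x (f k + g k) : ℂ)‖ ^ 2 ∧
      ∑' k, ‖(inner ℂ x (f k + g k) : ℂ)‖ ^ 2 ≤ 2 * (δ₁ + δ₂) * ‖Θ x‖ ^ 2 :=
  stmt_7_general f g Θ γ₁ δ₁ γ₂ δ₂ m₀ hγ₁ hγ₂ hδ₂ hm₀ hframef hframeg hbb hcond
end
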